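/- Let i ∈ {1,…,n} with ker(π_{i}) ∩ L = {0}, and S ⊆ L^{i}. Then S is an ω̄^i-Gröbner basis of L^{i} if and only if π_{i}⁻¹(S) is a generating set of L. -/

import Mathlib

open scoped Classical

noncomputable section

variable {ι : Type*} [Fintype ι]

/-- `x ∈ ℕ^n`, i.e. all coordinates nonnegative. -/
def Nonneg (x : ι → ℤ) : Prop := ∀ i, 0 ≤ x i

/-- componentwise positive part `u⁺`. -/
def vposPart (x : ι → ℤ) : ι → ℤ := fun i => max (x i) 0

/-- componentwise negative part `u⁻`. -/
def vnegPart (x : ι → ℤ) : ι → ℤ := fun i => max (-x i) 0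

/-- support of a vector. -/
def suppV (x : ι → ℤ) : Set ι := {i | x i ≠ 0}

/-- membership in the fiber `F_{L,b} = {x ∈ ℕ^n : x ≡ b (mod L)}`. -/
def inFiber (L : AddSubgroup (ι → ℤ)) (b x : ι → ℤ) : Prop :=
  Nonneg x ∧ x - b ∈ L

/-- adjacency in the fiber graph: `x` and `y` differ by an element of `±S`. -/
def adjS (S : Set (ι → ℤ)) (x y : ι → ℤ) : Prop := x - y ∈ S ∨ y - x ∈ S

/-- `p 0, p 1, …, p k` is a path in the fiber graph `G(F_{L,b}, S)`. -/
def IsPathIn (L : AddSubgroup (ι → ℤ)) (S : Set (ι → ℤ)) (b : ι → ℤ)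
    (k : ℕ) (p : ℕ → ι → ℤ) : Prop :=
  (∀ i ≤ k, inFiber L b (p i)) ∧ ∀ i < k, adjS S (p i) (p (i+1))

/-- `x` and `y` are connected in the fiber graph `G(F_{L,b}, S)`. -/
def ConnIn (L : AddSubgroup (ι → ℤ)) (S : Set (ι → ℤ)) (b x y : ι → ℤ) : Prop :=
  ∃ k p, IsPathIn L S b k p ∧ p 0 = x ∧ p k = y

/-- `S` is a generating set of the lattice `L`: all fiber graphs are connected. -/
def IsGenSet (L : AddSubgroup (ι → ℤ)) (S : Set (ι → ℤ)) : Prop :=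
  ∀ b x y, inFiber L b x → inFiber L b y → ConnIn L S b x y

/-- `succ` (written `≻`) is a term ordering for `L`: an additive total
well-ordering on every fiber. -/
structure IsTermOrder (L : AddSubgroup (ι → ℤ))
    (succ : (ι → ℤ) → (ι → ℤ) → Prop) : Prop where
  trans : ∀ {x y z}, succ x y → succ y z → succ x z
  irrefl : ∀ x, ¬ succ x x
  total : ∀ b x y, inFiber L b x → inFiber L b y → x ≠ y → succ x y ∨ succ y x
  additive : ∀ x y γ, Nonneg γ → succ x y → succ (x + γ) (y + γ)
  wf : ∀ b, WellFounded (fun x y : ι → ℤ => inFiber L b x ∧ inFiber L b y ∧ succ y x)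

/-- `L_≻ = {u ∈ L : u⁺ ≻ u⁻}`. -/
def Lpos (L : AddSubgroup (ι → ℤ)) (succ : (ι → ℤ) → (ι → ℤ) → Prop) :
    Set (ι → ℤ) :=
  {u | u ∈ L ∧ succ (vposPart u) (vnegPart u)}

/-- `m` is the `≻`-minimal element of the fiber `F_{L,b}`. -/
def IsMinimalFiber (L : AddSubgroup (ι → ℤ)) (b : ι → ℤ)
    (succ : (ι → ℤ) → (ι → ℤ) → Prop) (m : ι → ℤ) : Prop :=
  inFiber L b m ∧ ∀ y, inFiber L b y → y ≠ m → succ y m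

/-- `G` is a `≻`-Gröbner basis of `L`: from every `x ∈ ℕ^n` there is a
`≻`-decreasing path in `G(F_{L,x},G)` to the `≻`-minimal element of `F_{L,x}`. -/
def IsGroebner (L : AddSubgroup (ι → ℤ)) (succ : (ι → ℤ) → (ι → ℤ) → Prop)
    (G : Set (ι → ℤ)) : Prop :=
  ∀ x, Nonneg x → ∃ m, IsMinimalFiber L x succ m ∧
    ∃ k p, IsPathIn L G x k p ∧ p 0 = x ∧ p k = m ∧ ∀ i < k, succ (p i) (p (i+1))

/-- there is a `≻`-reduction path from `x` to `y` in `G(F_{L,b},G)`: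
no intermediate node is `≻` than both endpoints. -/
def IsRedPath (L : AddSubgroup (ι → ℤ)) (G : Set (ι → ℤ)) (b : ι → ℤ)
    (succ : (ι → ℤ) → (ι → ℤ) → Prop) (x y : ι → ℤ) : Prop :=
  ∃ k p, IsPathIn L G b k p ∧ p 0 = x ∧ p k = y ∧
    ∀ i, 0 < i → i < k → ¬ (succ (p i) x ∧ succ (p i) y)

/-- `(x,z,y)` is a `≻`-critical path in `G(F_{L,b},G)`. -/
def IsCriticalIn (L : AddSubgroup (ι → ℤ)) (G : Set (ι → ℤ)) (b : ι → ℤ)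
    (succ : (ι → ℤ) → (ι → ℤ) → Prop) (x z y : ι → ℤ) : Prop :=
  inFiber L b x ∧ inFiber L b z ∧ inFiber L b y ∧
  adjS G x z ∧ adjS G z y ∧ succ z x ∧ succ z y

/-- `z^(u,v) := max{u⁺, v⁺}` componentwise. -/
def zOf (u v : ι → ℤ) : ι → ℤ := fun i => max (vposPart u i) (vposPart v i)

/-- `x^(u,v) := z^(u,v) − u`. -/
def xOf (u v : ι → ℤ) : ι → ℤ := zOf u v - u

/-- `y^(u,v) := z^(u,v) − v`. -/
def yOf (u v : ι → ℤ) : ι → ℤ := zOf u v - v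

/-- `(x,z,y)` is a `≻`-critical path for the pair `(u,v)`. -/
def IsCriticalFor (succ : (ι → ℤ) → (ι → ℤ) → Prop) (u v x z y : ι → ℤ) : Prop :=
  Nonneg x ∧ Nonneg z ∧ Nonneg y ∧ z - x = u ∧ z - y = v ∧ succ z x ∧ succ z y

/-- rational inner product `φ·x`. -/
def qdot (φ : ι → ℚ) (x : ι → ℤ) : ℚ := ∑ i, φ i * (x i : ℚ)

/-- there is a `φ`-reduction path from `x` to `y` in `G(F_{L,b},G)`. -/
def IsPhiRedPath (L : AddSubgroup (ι → ℤ)) (G : Set (ι → ℤ)) (b : ι → ℤ)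
    (φ : ι → ℚ) (x y : ι → ℤ) : Prop :=
  ∃ k p, IsPathIn L G b k p ∧ p 0 = x ∧ p k = y ∧
    ∀ i, 0 < i → i < k → ¬ (qdot φ x < qdot φ (p i) ∧ qdot φ y < qdot φ (p i))

/-- `G` is a `φ`-Gröbner basis of `L`. -/
def IsPhiGroebner (L : AddSubgroup (ι → ℤ)) (φ : ι → ℚ) (G : Set (ι → ℤ)) : Prop :=
  ∀ b x y, inFiber L b x → inFiber L b y → IsPhiRedPath L G b φ x y

/-- `x ∧_σ y`: componentwise min on `σ`, zero elsewhere. -/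
def meetOn (σ : Set ι) (x y : ι → ℤ) : ι → ℤ :=
  fun i => if i ∈ σ then min (x i) (y i) else 0

/-- `T` is `σ`-saturated on `S`. -/
def IsSaturatedOn (L : AddSubgroup (ι → ℤ)) (σ : Set ι) (S T : Set (ι → ℤ)) : Prop :=
  ∀ b x y, inFiber L b x → inFiber L b y → ConnIn L S b x y →
    ConnIn L T (b - meetOn σ x y) (x - meetOn σ x y) (y - meetOn σ x y)

/-- membership in `F^σ_{L,b}`: nonnegative outside `σ`. -/
def inFiberFree (L : AddSubgroup (ι → ℤ)) (σ : Set ι) (b x : ι → ℤ) : Prop :=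
  (∀ i, i ∉ σ → 0 ≤ x i) ∧ x - b ∈ L

/-- path in the graph `G(F^σ_{L,b}, S)`. -/
def IsPathFree (L : AddSubgroup (ι → ℤ)) (σ : Set ι) (S : Set (ι → ℤ)) (b : ι → ℤ)
    (k : ℕ) (p : ℕ → ι → ℤ) : Prop :=
  (∀ i ≤ k, inFiberFree L σ b (p i)) ∧ ∀ i < k, adjS S (p i) (p (i+1))

/-- connectivity in `G(F^σ_{L,b}, S)`. -/
def ConnFree (L : AddSubgroup (ι → ℤ)) (σ : Set ι) (S : Set (ι → ℤ))
    (b x y : ι → ℤ) : Prop :=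
  ∃ k p, IsPathFree L σ S b k p ∧ p 0 = x ∧ p k = y

/-- `S` is a `σ`-generating set of `L`. -/
def IsGenSetFree (L : AddSubgroup (ι → ℤ)) (σ : Set ι) (S : Set (ι → ℤ)) : Prop :=
  ∀ b x y, inFiberFree L σ b x → inFiberFree L σ b y → ConnFree L σ S b x y

/-- there is a `z`-bounded path from `x` to `y` in `G(F_{L,b},G)`:
all nodes are `≺ z`. -/
def IsBoundedPath (L : AddSubgroup (ι → ℤ)) (G : Set (ι → ℤ)) (b : ι → ℤ)
    (succ : (ι → ℤ) → (ι → ℤ) → Prop) (z x y : ι → ℤ) : Prop :=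
  ∃ k p, IsPathIn L G b k p ∧ p 0 = x ∧ p k = y ∧ ∀ i ≤ k, succ z (p i)

/-- `ē^i = −e^i` as a rational vector. -/
def ebar [DecidableEq ι] (i : ι) : ι → ℚ := fun j => if j = i then -1 else 0

/-- projection deleting the `i`-th coordinate. -/
def projCoord {n : ℕ} (i : Fin (n+1)) : (Fin (n+1) → ℤ) →+ (Fin n → ℤ) where
  toFun x := fun j => x (i.succAbove j)
  map_zero' := rfl
  map_add' _ _ := rfl

/-- projection onto the coordinates outside `σ`. -/
def projSet {n : ℕ} (σ : Finset (Fin n)) :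
    (Fin n → ℤ) →+ ({ i : Fin n // i ∉ σ } → ℤ) where
  toFun x := fun j => x j.1
  map_zero' := rfl
  map_add' _ _ := rfl

end

/-! On `L` the `i`-th coordinate is determined by the other ones, `u i = ω · π_i u`, so on a fiber
`F_{L,b}` the `i`-th coordinate of a point is its `ω`-value after projection, up to a constant.
Hence a path in a fiber of `L^i` lifts to one of `L` with nodes in `ℕ^(n+1)` as soon as the
`ω`-values of its nodes stay above the smaller of the endpoint values, which is what a
`-ω`-reduction path guarantees. Conversely, in a fiber graph of a generating set the endpoints
`x, y` are joined by a path keeping the `i`-th coordinate `≥ m := min x_i y_i`: connect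
`x - m e_i` and `y - m e_i` and shift back. Its projection is then a `-ω`-reduction path. -/

section General

variable {ι : Type*}

lemma qdot_sub [Fintype ι] (φ : ι → ℚ) (x y : ι → ℤ) :
    qdot φ (x - y) = qdot φ x - qdot φ y := by
  simp [qdot, mul_sub, Finset.sum_sub_distrib]

lemma qdot_neg [Fintype ι] (φ : ι → ℚ) (x : ι → ℤ) : qdot (-φ) x = -qdot φ x := by
  simp [qdot, Finset.sum_neg_distrib]

lemma not_qdot_neg_lt_and_lt_iff [Fintype ι] (φ : ι → ℚ) (x y z : ι → ℤ) :
    ¬(qdot (-φ) x < qdot (-φ) z ∧ qdot (-φ) y < qdot (-φ) z) ↔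
      min (qdot φ x) (qdot φ y) ≤ qdot φ z := by
  simp only [qdot_neg, neg_lt_neg_iff, min_le_iff, not_and_or, not_lt]

lemma inFiber.sub_mem {L : AddSubgroup (ι → ℤ)} {b x y : ι → ℤ} (hx : inFiber L b x)
    (hy : inFiber L b y) : x - y ∈ L := by
  simpa only [sub_sub_sub_cancel_right] using L.sub_mem hx.2 hy.2

lemma IsPathIn.add_right {L : AddSubgroup (ι → ℤ)} {G : Set (ι → ℤ)} {b e : ι → ℤ}
    {k : ℕ} {p : ℕ → ι → ℤ} (hp : IsPathIn L G b k p) (he : ∀ j ≤ k, Nonneg (p j + e)) :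
    IsPathIn L G (b + e) k (fun j => p j + e) := by
  refine ⟨fun j hj => ⟨he j hj, ?_⟩, fun j hj => ?_⟩
  · simpa only [add_sub_add_right_eq_sub] using (hp.1 j hj).2
  · simpa only [adjS, add_sub_add_right_eq_sub] using hp.2 j hj

lemma IsGenSet.exists_path_ge {L : AddSubgroup (ι → ℤ)} {G : Set (ι → ℤ)}
    (hG : IsGenSet L G) {b x y e : ι → ℤ} (hx : inFiber L b x) (hy : inFiber L b y) (he : Nonneg e)
    (hex : e ≤ x) (hey : e ≤ y) :
    ∃ k p, IsPathIn L G b k p ∧ p 0 = x ∧ p k = y ∧ ∀ j ≤ k, e ≤ p j := by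
  have shift : ∀ z, inFiber L b z → e ≤ z → inFiber L (b - e) (z - e) := fun z hz hez =>
    ⟨fun l => sub_nonneg.mpr (hez l), by simpa only [sub_sub_sub_cancel_right] using hz.2⟩
  obtain ⟨k, q, hq, hq0, hqk⟩ := hG _ _ _ (shift x hx hex) (shift y hy hey)
  have hqe : ∀ j ≤ k, e ≤ q j + e := fun j hj l =>
    le_add_of_nonneg_left ((hq.1 j hj).1 l)
  refine ⟨k, fun j => q j + e, ?_, by simp [hq0], by simp [hqk], hqe⟩
  simpa only [sub_add_cancel] using
    hq.add_right fun j hj l => le_trans (he l) (hqe j hj l)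

end General

section Projection

variable {n : ℕ} {L : AddSubgroup (Fin (n+1) → ℤ)} {i : Fin (n+1)}

@[simp]
lemma projCoord_apply (x : Fin (n+1) → ℤ) (j : Fin n) : projCoord i x j = x (i.succAbove j) :=
  rfl

lemma nonneg_of_projCoord {x : Fin (n+1) → ℤ} (hx : Nonneg (projCoord i x)) (hxi : 0 ≤ x i) :
    Nonneg x := by
  intro l
  obtain rfl | ⟨j, rfl⟩ := i.eq_self_or_eq_succAbove l
  exacts [hxi, hx j]

lemma inFiber.map_projCoord {b x : Fin (n+1) → ℤ} (hx : inFiber L b x) :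
    inFiber (L.map (projCoord i)) (projCoord i b) (projCoord i x) :=
  ⟨fun j => hx.1 _, by rw [← map_sub]; exact AddSubgroup.mem_map_of_mem _ hx.2⟩

lemma IsPathIn.map_projCoord {S : Set (Fin n → ℤ)} {b : Fin (n+1) → ℤ} {k : ℕ}
    {p : ℕ → Fin (n+1) → ℤ} (hp : IsPathIn L {u | u ∈ L ∧ projCoord i u ∈ S} b k p) :
    IsPathIn (L.map (projCoord i)) S (projCoord i b) k (fun j => projCoord i (p j)) := by
  refine ⟨fun j hj => (hp.1 j hj).map_projCoord, fun j hj => ?_⟩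
  simpa only [adjS, map_sub] using (hp.2 j hj).imp And.right And.right

lemma eq_of_sub_mem_of_projCoord_eq (hker : ∀ u ∈ L, projCoord i u = 0 → u = 0)
    {x y : Fin (n+1) → ℤ} (hxy : x - y ∈ L) (h : projCoord i x = projCoord i y) : x = y :=
  sub_eq_zero.mp (hker _ hxy (by rw [map_sub, h, sub_self]))

lemma coord_sub_qdot_projCoord_eq {ω : Fin n → ℚ}
    (hω : ∀ u ∈ L, qdot ω (projCoord i u) = (u i : ℚ)) {b x : Fin (n+1) → ℤ} (hx : x - b ∈ L) :
    (x i : ℚ) - qdot ω (projCoord i x) = b i - qdot ω (projCoord i b) := by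
  have h := hω _ hx
  rw [map_sub, qdot_sub, Pi.sub_apply, Int.cast_sub] at h
  linarith

lemma min_qdot_projCoord_le_iff {ω : Fin n → ℚ}
    (hω : ∀ u ∈ L, qdot ω (projCoord i u) = (u i : ℚ)) {b x y z : Fin (n+1) → ℤ}
    (hx : x - b ∈ L) (hy : y - b ∈ L) (hz : z - b ∈ L) :
    min (qdot ω (projCoord i x)) (qdot ω (projCoord i y)) ≤ qdot ω (projCoord i z) ↔
      min (x i) (y i) ≤ z i := by
  have hx' := coord_sub_qdot_projCoord_eq hω hx
  have hy' := coord_sub_qdot_projCoord_eq hω hy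
  have hz' := coord_sub_qdot_projCoord_eq hω hz
  rw [← Int.cast_le (R := ℚ), Int.cast_min, min_le_iff, min_le_iff]
  constructor <;> rintro (h | h) <;> [left; right; left; right] <;> linarith

lemma IsPathIn.lift_projCoord {S : Set (Fin n → ℤ)} {b : Fin (n+1) → ℤ} {k : ℕ}
    {q : ℕ → Fin n → ℤ} (hq : IsPathIn (L.map (projCoord i)) S (projCoord i b) k q)
    (hlift : ∀ j ≤ k, ∃ z, inFiber L b z ∧ projCoord i z = q j) :
    ∃ p, IsPathIn L {u | u ∈ L ∧ projCoord i u ∈ S} b k p ∧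
      ∀ j ≤ k, projCoord i (p j) = q j := by
  choose! p hp hpq using hlift
  refine ⟨p, ⟨hp, fun j hj => ?_⟩, hpq⟩
  rcases hq.2 j hj with h | h
  · exact .inl ⟨(hp _ hj.le).sub_mem (hp _ hj), by rwa [map_sub, hpq _ hj.le, hpq _ hj]⟩
  · exact .inr ⟨(hp _ hj).sub_mem (hp _ hj.le), by rwa [map_sub, hpq _ hj.le, hpq _ hj]⟩

lemma exists_inFiber_lift_projCoord {b' x' y' : Fin n → ℤ}
    (hx : inFiber (L.map (projCoord i)) b' x') (hy : inFiber (L.map (projCoord i)) b' y') :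
    ∃ b x y, inFiber L b x ∧ inFiber L b y ∧
      projCoord i b = b' ∧ projCoord i x = x' ∧ projCoord i y = y' := by
  obtain ⟨u, hu, hux⟩ := AddSubgroup.mem_map.mp hx.2
  obtain ⟨v, hv, hvy⟩ := AddSubgroup.mem_map.mp hy.2
  obtain ⟨b, hb, hbi⟩ : ∃ b, projCoord i b = b' ∧ b i = max 0 (max (-u i) (-v i)) :=
    ⟨i.insertNth (max 0 (max (-u i) (-v i))) b', funext fun j => by simp,
      Fin.insertNth_apply_same ..⟩
  have lift : ∀ w ∈ L, ∀ w', projCoord i w = w' - b' → Nonneg w' → 0 ≤ b i + w i →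
      inFiber L b (b + w) ∧ projCoord i (b + w) = w' := fun w hw w' hw' hnn hwi => by
    have hproj : projCoord i (b + w) = w' := by rw [map_add, hb, hw', add_sub_cancel]
    exact ⟨⟨nonneg_of_projCoord (hproj ▸ hnn) hwi, by simpa using hw⟩, hproj⟩
  obtain ⟨hxF, hxπ⟩ := lift u hu x' hux hx.1 (by omega)
  obtain ⟨hyF, hyπ⟩ := lift v hv y' hvy hy.1 (by omega)
  exact ⟨b, _, _, hxF, hyF, hb, hxπ, hyπ⟩

end Projection

section Directions

variable {n : ℕ} {L : AddSubgroup (Fin (n+1) → ℤ)} {i : Fin (n+1)} {ω : Fin n → ℚ}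
  {S : Set (Fin n → ℤ)}

lemma isGenSet_of_isPhiGroebner (hker : ∀ u ∈ L, projCoord i u = 0 → u = 0)
    (hω : ∀ u ∈ L, qdot ω (projCoord i u) = (u i : ℚ))
    (hG : IsPhiGroebner (L.map (projCoord i)) (-ω) S) :
    IsGenSet L {u | u ∈ L ∧ projCoord i u ∈ S} := by
  intro b x y hx hy
  obtain ⟨k, q, hq, hq0, hqk, hred⟩ := hG _ _ _ hx.map_projCoord hy.map_projCoord
  have hbound : ∀ j ≤ k,
      min (qdot ω (projCoord i x)) (qdot ω (projCoord i y)) ≤ qdot ω (q j) := by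
    intro j hj
    rcases Nat.eq_zero_or_pos j with rfl | hj0
    · exact hq0 ▸ min_le_left _ _
    rcases hj.lt_or_eq with hjk | rfl
    · exact (not_qdot_neg_lt_and_lt_iff ..).mp (hred j hj0 hjk)
    · exact hqk ▸ min_le_right _ _
  have hlift : ∀ j ≤ k, ∃ z, inFiber L b z ∧ projCoord i z = q j := by
    intro j hj
    obtain ⟨u, hu, hπu⟩ := AddSubgroup.mem_map.mp (hq.1 j hj).2
    have hz : b + u - b ∈ L := by simpa using hu
    have hπz : projCoord i (b + u) = q j := by rw [map_add, hπu, add_sub_cancel]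
    have hzi := (min_qdot_projCoord_le_iff hω hx.2 hy.2 hz).mp (hπz ▸ hbound j hj)
    exact ⟨b + u, ⟨nonneg_of_projCoord (hπz ▸ (hq.1 j hj).1)
      ((le_min (hx.1 i) (hy.1 i)).trans hzi), hz⟩, hπz⟩
  obtain ⟨p, hp, hpq⟩ := hq.lift_projCoord hlift
  refine ⟨k, p, hp, ?_, ?_⟩
  · exact eq_of_sub_mem_of_projCoord_eq hker ((hp.1 0 k.zero_le).sub_mem hx)
      (by rw [hpq 0 k.zero_le, hq0])
  · exact eq_of_sub_mem_of_projCoord_eq hker ((hp.1 k le_rfl).sub_mem hy)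
      (by rw [hpq k le_rfl, hqk])

lemma isPhiGroebner_of_isGenSet (hω : ∀ u ∈ L, qdot ω (projCoord i u) = (u i : ℚ))
    (hG : IsGenSet L {u | u ∈ L ∧ projCoord i u ∈ S}) :
    IsPhiGroebner (L.map (projCoord i)) (-ω) S := by
  intro b' x' y' hx' hy'
  obtain ⟨b, x, y, hx, hy, rfl, rfl, rfl⟩ := exists_inFiber_lift_projCoord hx' hy'
  set m := min (x i) (y i)
  have hsingle : ∀ z : Fin (n+1) → ℤ, Nonneg z → m ≤ z i → Pi.single i m ≤ z :=
    fun z hz hzi l => by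
      rw [Pi.single_apply]
      split_ifs with hl
      exacts [hl ▸ hzi, hz l]
  have hm : Nonneg (Pi.single i m) := fun l => by
    rw [Pi.single_apply]
    split_ifs
    exacts [le_min (hx.1 i) (hy.1 i), le_rfl]
  obtain ⟨k, p, hp, hp0, hpk, hpm⟩ := hG.exists_path_ge hx hy hm
    (hsingle x hx.1 (min_le_left _ _)) (hsingle y hy.1 (min_le_right _ _))
  refine ⟨k, fun j => projCoord i (p j), hp.map_projCoord, congrArg _ hp0, congrArg _ hpk,
    fun j _ hjk => ?_⟩
  rw [not_qdot_neg_lt_and_lt_iff, min_qdot_projCoord_le_iff hω hx.2 hy.2 (hp.1 j hjk.le).2]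
  simpa only [Pi.single_eq_same] using hpm j hjk.le i

end Directions

theorem stmt13_general {n : ℕ} (L : AddSubgroup (Fin (n+1) → ℤ))
    (i : Fin (n+1))
    (hker : ∀ u ∈ L, projCoord i u = 0 → u = 0)
    (ω : Fin n → ℚ) (hω : ∀ u ∈ L, qdot ω (projCoord i u) = (u i : ℚ))
    (S : Set (Fin n → ℤ)) :
    IsPhiGroebner (L.map (projCoord i)) (-ω) S ↔
      IsGenSet L {u | u ∈ L ∧ projCoord i u ∈ S} :=
  ⟨isGenSet_of_isPhiGroebner hker hω, isPhiGroebner_of_isGenSet hω⟩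

/-- with `ker(π_i) ∩ L = {0}` and `S ⊆ L^i`, `S` is an
`ω̄^i`-Gröbner basis of `L^i` iff `π_i⁻¹(S)` is a generating set of `L`. -/
theorem stmt13 {n : ℕ} (L : AddSubgroup (Fin (n+1) → ℤ))
    (hL : ∀ u ∈ L, Nonneg u → u = 0) (i : Fin (n+1))
    (hker : ∀ u ∈ L, projCoord i u = 0 → u = 0)
    (ω : Fin n → ℚ) (hω : ∀ u ∈ L, qdot ω (projCoord i u) = (u i : ℚ))
    (S : Set (Fin n → ℤ)) (hS : ∀ s ∈ S, s ∈ L.map (projCoord i)) :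
    IsPhiGroebner (L.map (projCoord i)) (-ω) S ↔
      IsGenSet L {u | u ∈ L ∧ projCoord i u ∈ S} :=
  stmt13_general L i hker ω hω S
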